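/- arXiv:2504.03809 — 6 statements merged into one kernel-verified Lean document; each statement's English description precedes it below -/
import Mathlib

section
/- Let n and m be positive integers and let X be an m×m matrix with nonnegative integer entries such that every row of X and every column of X sums to n. Then there exist a positive integer r with r ≤ m² − 2m + 2, pairwise distinct m×m permutation matrices P_1,…,P_r, and positive integers z_1,…,z_r with z_1 + ⋯ + z_r = n, such that X = z_1·P_1 + ⋯ + z_r·P_r. -/
/-!
Peel off permutation matrices greedily. A nonnegative integer matrix with equal positive line
sums has, by Hall's (or Birkhoff's) theorem, a permutation `τ` in its support; subtract
`min_i X i (τ i)` copies of `τ`'s permutation matrix. Each step empties a cell of `τ`'s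
matrix, and every later permutation avoids that cell, so the permutation matrices obtained are
linearly independent. All of them lie in the space of semimagic squares (matrices all of whose
line sums are equal), whose dimension is `(m - 1)^2 + 1`: such a matrix is determined by its
upper-left `(m - 1) × (m - 1)` block together with its line sum.
-/

open Finset

/-- An m×m permutation matrix: a 0–1 matrix with exactly one 1 in each row
and each column, i.e. entry (i,j) is 1 exactly when j = σ i for some
permutation σ. -/
def IsPermMatrix {m : ℕ} (P : Matrix (Fin m) (Fin m) ℕ) : Prop :=
  ∃ σ : Equiv.Perm (Fin m), ∀ i j, P i j = if j = σ i then 1 else 0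

namespace Matrix

variable {R ι : Type*}

section PermMatrix

variable [DecidableEq ι]

theorem permMatrix_apply_eq_ite [Zero R] [One R] (σ : Equiv.Perm ι) (i j : ι) :
    σ.permMatrix R i j = if j = σ i then 1 else 0 := by
  simp [Equiv.toPEquiv_apply, eq_comm]

theorem ne_of_eq_sum_smul_permMatrix {κ : Type*} [Fintype κ] {X : Matrix ι ι ℕ}
    {σ : κ → Equiv.Perm ι} {z : κ → ℕ} (hz : ∀ k, 0 < z k)
    (hX : X = ∑ k, z k • (σ k).permMatrix ℕ) {i j : ι} (hij : X i j = 0) (k : κ) :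
    σ k i ≠ j := by
  rintro rfl
  rw [hX, sum_apply, sum_eq_zero_iff] at hij
  simpa [permMatrix_apply_eq_ite, (hz k).ne'] using hij k (mem_univ k)

theorem permMatrix_notMem_span [Semiring R] [Nontrivial R] {κ : Type*}
    {σ : κ → Equiv.Perm ι} {τ : Equiv.Perm ι} {i : ι} (h : ∀ k, σ k i ≠ τ i) :
    τ.permMatrix R ∉ Submodule.span R (Set.range fun k => (σ k).permMatrix R) := by
  intro hmem
  have hker : Submodule.span R (Set.range fun k => (σ k).permMatrix R) ≤
      LinearMap.ker (entryLinearMap R R i (τ i)) :=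
    Submodule.span_le.mpr (Set.range_subset_iff.mpr fun k => by simp [h k])
  simpa using hker hmem

theorem permMatrix_injective [MulZeroOneClass R] [Nontrivial R] :
    Function.Injective fun σ : Equiv.Perm ι => σ.permMatrix R := fun σ τ h =>
  Equiv.ext fun i => by simpa [permMatrix_apply_eq_ite, eq_comm] using congrFun (congrFun h i) (σ i)

end PermMatrix

variable [Fintype ι]

def HasLineSums [AddCommMonoid R] (M : Matrix ι ι R) (s : R) : Prop :=
  (∀ i, ∑ j, M i j = s) ∧ ∀ j, ∑ i, M i j = s

theorem HasLineSums.add [AddCommMonoid R] {A B : Matrix ι ι R} {s t : R}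
    (hA : HasLineSums A s) (hB : HasLineSums B t) : HasLineSums (A + B) (s + t) :=
  ⟨fun i => by simp [sum_add_distrib, hA.1, hB.1], fun j => by simp [sum_add_distrib, hA.2, hB.2]⟩

theorem HasLineSums.smul {S : Type*} [Semiring S] [AddCommMonoid R] [Module S R]
    {A : Matrix ι ι R} {s : R} (hA : HasLineSums A s) (c : S) : HasLineSums (c • A) (c • s) :=
  ⟨fun i => by simp [← smul_sum, hA.1], fun j => by simp [← smul_sum, hA.2]⟩

theorem HasLineSums.tsub_of_add {A B : Matrix ι ι ℕ} {s t : ℕ}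
    (h : HasLineSums (A + B) s) (hB : HasLineSums B t) : HasLineSums A (s - t) :=
  ⟨fun i => eq_tsub_of_add_eq (by simpa [sum_add_distrib, hB.1] using h.1 i),
    fun j => eq_tsub_of_add_eq (by simpa [sum_add_distrib, hB.2] using h.2 j)⟩

theorem HasLineSums.eq_zero_of_submatrix_castSucc {m : ℕ} [AddCommMonoid R]
    {M : Matrix (Fin (m + 1)) (Fin (m + 1)) R} (hM : HasLineSums M 0)
    (hblock : M.submatrix Fin.castSucc Fin.castSucc = 0) : M = 0 := by
  have hblock' (i j : Fin m) : M i.castSucc j.castSucc = 0 := congrFun (congrFun hblock i) j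
  have hlast_row (j : Fin m) : M (Fin.last m) j.castSucc = 0 := by
    simpa [Fin.sum_univ_castSucc, hblock'] using hM.2 j.castSucc
  have hlast_col (i : Fin m) : M i.castSucc (Fin.last m) = 0 := by
    simpa [Fin.sum_univ_castSucc, hblock'] using hM.1 i.castSucc
  have hcorner : M (Fin.last m) (Fin.last m) = 0 := by
    simpa [Fin.sum_univ_castSucc, hlast_row] using hM.1 (Fin.last m)
  ext i j
  rcases Fin.eq_castSucc_or_eq_last i with ⟨i, rfl⟩ | rfl <;>
    rcases Fin.eq_castSucc_or_eq_last j with ⟨j, rfl⟩ | rfl <;> simp [*]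

variable [DecidableEq ι]

theorem hasLineSums_permMatrix [AddCommMonoidWithOne R] (σ : Equiv.Perm ι) :
    HasLineSums (σ.permMatrix R) 1 :=
  ⟨fun i => by simp, fun j => by simp [← Equiv.eq_symm_apply]⟩

/-- `X / n` is doubly stochastic, so by Birkhoff's theorem it is a convex combination of
permutation matrices; a permutation of positive weight lies in the support of `X`. -/
theorem exists_perm_forall_pos_apply {X : Matrix ι ι ℕ} {n : ℕ} (hX : HasLineSums X n)
    (hn : 0 < n) : ∃ σ : Equiv.Perm ι, ∀ i, 0 < X i (σ i) := by
  obtain ⟨M, hM, hXM⟩ : ∃ M ∈ doublyStochastic ℚ ι, X.map ((↑) : ℕ → ℚ) = (n : ℚ) • M :=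
    (exists_mem_doublyStochastic_eq_smul_iff (Nat.cast_nonneg n)).mpr
      ⟨fun i j => by simp, fun i => by simp [← Nat.cast_sum, hX.1 i],
        fun j => by simp [← Nat.cast_sum, hX.2 j]⟩
  obtain ⟨w, hw0, hw1, hwM⟩ := exists_eq_sum_perm_of_mem_doublyStochastic hM
  obtain ⟨σ, -, hσ⟩ := exists_ne_zero_of_sum_ne_zero (hw1 ▸ one_ne_zero)
  refine ⟨σ, fun i => ?_⟩
  have hMσ : w σ ≤ M i (σ i) := by
    rw [← hwM, sum_apply]
    calc w σ = (w σ • σ.permMatrix ℚ) i (σ i) := by simp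
      _ ≤ ∑ τ, (w τ • τ.permMatrix ℚ) i (σ i) :=
        single_le_sum (f := fun τ => (w τ • τ.permMatrix ℚ) i (σ i))
          (fun τ _ => mul_nonneg (hw0 τ) (by rw [permMatrix_apply_eq_ite]; split_ifs <;> simp))
          (mem_univ σ)
  have hXσ : (X i (σ i) : ℚ) = n * M i (σ i) := by
    simpa using congrFun (congrFun hXM i) (σ i)
  have : (0 : ℚ) < X i (σ i) := by
    rw [hXσ]; exact mul_pos (by exact_mod_cast hn) ((hw0 σ).lt_of_ne' hσ |>.trans_le hMσ)
  exact_mod_cast this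

theorem exists_eq_add_smul_permMatrix [Nonempty ι] {X : Matrix ι ι ℕ} {n : ℕ}
    (hX : HasLineSums X n) (hn : 0 < n) :
    ∃ (Y : Matrix ι ι ℕ) (τ : Equiv.Perm ι) (z : ℕ) (i : ι), 0 < z ∧ z ≤ n ∧
      X = Y + z • τ.permMatrix ℕ ∧ HasLineSums Y (n - z) ∧ Y i (τ i) = 0 := by
  obtain ⟨τ, hτ⟩ := exists_perm_forall_pos_apply hX hn
  obtain ⟨i, -, hi⟩ := exists_min_image univ (fun i => X i (τ i)) univ_nonempty
  set Y := X - X i (τ i) • τ.permMatrix ℕ with hY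
  have hXY : X = Y + X i (τ i) • τ.permMatrix ℕ := by
    ext i' j
    simp only [hY, add_apply, sub_apply, smul_apply, smul_eq_mul, permMatrix_apply_eq_ite]
    split_ifs with hj
    · subst hj; simp [hi i' (mem_univ i')]
    · simp
  refine ⟨Y, τ, X i (τ i), i, hτ i, ?_, hXY, ?_, ?_⟩
  · exact hX.1 i ▸ single_le_sum (fun _ _ => Nat.zero_le _) (mem_univ _)
  · have hP : HasLineSums (X i (τ i) • τ.permMatrix ℕ) (X i (τ i)) := by
      simpa using (hasLineSums_permMatrix (R := ℕ) τ).smul (X i (τ i))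
    exact (hXY ▸ hX).tsub_of_add hP
  · simp only [hY, sub_apply, smul_apply, smul_eq_mul, permMatrix_apply_eq_ite, if_pos, mul_one,
      Nat.sub_self]

theorem exists_eq_sum_smul_permMatrix_linearIndependent (K : Type*) [DivisionRing K]
    [Nonempty ι] {X : Matrix ι ι ℕ} {n : ℕ} (hX : HasLineSums X n) :
    ∃ (r : ℕ) (σ : Fin r → Equiv.Perm ι) (z : Fin r → ℕ), (∀ k, 0 < z k) ∧ ∑ k, z k = n ∧
      X = ∑ k, z k • (σ k).permMatrix ℕ ∧ LinearIndependent K fun k => (σ k).permMatrix K := by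
  induction n using Nat.strong_induction_on generalizing X with
  | _ n ih =>
  rcases Nat.eq_zero_or_pos n with rfl | hn
  · refine ⟨0, Fin.elim0, Fin.elim0, fun k => k.elim0, by simp, ?_, linearIndependent_empty_type⟩
    ext i j
    simpa using sum_eq_zero_iff.mp (hX.1 i) j (mem_univ j)
  obtain ⟨Y, τ, z₀, i, hz₀, hz₀n, hXY, hY, hYi⟩ := exists_eq_add_smul_permMatrix hX hn
  obtain ⟨r, σ, z, hz, hsum, hYσ, hli⟩ := ih (n - z₀) (by omega) hY
  refine ⟨r + 1, Fin.cons τ σ, Fin.cons z₀ z, Fin.cases hz₀ hz, ?_, ?_, ?_⟩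
  · rw [Fin.sum_cons, hsum]; omega
  · rw [Fin.sum_univ_succ]; simp [hXY, hYσ, add_comm]
  · rw [← Function.comp_def (fun σ : Equiv.Perm ι => σ.permMatrix K), Fin.comp_cons]
    exact linearIndependent_finCons.mpr
      ⟨hli, permMatrix_notMem_span (ne_of_eq_sum_smul_permMatrix hz hYσ hYi)⟩

variable (R ι) in
def semimagic [Semiring R] : Submodule R (Matrix ι ι R) where
  carrier := {M | ∃ s, HasLineSums M s}
  add_mem' := fun ⟨s, hs⟩ ⟨t, ht⟩ => ⟨s + t, hs.add ht⟩
  zero_mem' := ⟨0, by simp [HasLineSums]⟩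
  smul_mem' c _ := fun ⟨s, hs⟩ => ⟨c • s, hs.smul c⟩

theorem permMatrix_mem_semimagic [Semiring R] (σ : Equiv.Perm ι) :
    σ.permMatrix R ∈ semimagic R ι :=
  ⟨1, hasLineSums_permMatrix σ⟩


theorem finrank_semimagic_le (K : Type*) [DivisionRing K] (m : ℕ) :
    Module.finrank K (semimagic K (Fin (m + 1))) ≤ m ^ 2 + 1 := by
  let f : Matrix (Fin (m + 1)) (Fin (m + 1)) K →ₗ[K] Matrix (Fin m) (Fin m) K × K :=
    { toFun := fun M => (M.submatrix Fin.castSucc Fin.castSucc, ∑ j, M (Fin.last m) j)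
      map_add' := fun A B => by simp [submatrix_add, sum_add_distrib]
      map_smul' := fun c A => by simp [submatrix_smul, mul_sum] }
  have hf : Function.Injective (f.domRestrict (semimagic K _)) := by
    refine (injective_iff_map_eq_zero _).mpr fun ⟨M, s, hM⟩ h => ?_
    simp only [LinearMap.domRestrict_apply, Prod.mk_eq_zero, f, LinearMap.coe_mk,
      AddHom.coe_mk, hM.1] at h
    exact Subtype.ext ((h.2 ▸ hM).eq_zero_of_submatrix_castSucc h.1)
  simpa [Module.finrank_prod, Module.finrank_matrix, sq] using
    LinearMap.finrank_le_finrank_of_injective hf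

theorem card_le_of_linearIndependent_permMatrix (K : Type*) [DivisionRing K] {m : ℕ}
    {κ : Type*} [Fintype κ] {σ : κ → Equiv.Perm (Fin (m + 1))}
    (hσ : LinearIndependent K fun k => (σ k).permMatrix K) : Fintype.card κ ≤ m ^ 2 + 1 :=
  calc Fintype.card κ
      = Module.finrank K (Submodule.span K (Set.range fun k => (σ k).permMatrix K)) :=
        (finrank_span_eq_card hσ).symm
    _ ≤ Module.finrank K (semimagic K (Fin (m + 1))) :=
      Submodule.finrank_mono <| Submodule.span_le.mpr <|
        Set.range_subset_iff.mpr fun k => permMatrix_mem_semimagic (σ k)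
    _ ≤ m ^ 2 + 1 := finrank_semimagic_le K m

end Matrix

open Matrix

theorem position_matrix_decomposition (m n : ℕ) (hm : 0 < m) (hn : 0 < n)
    (X : Matrix (Fin m) (Fin m) ℕ)
    (hrow : ∀ i, ∑ j, X i j = n) (hcol : ∀ j, ∑ i, X i j = n) :
    ∃ (r : ℕ) (P : Fin r → Matrix (Fin m) (Fin m) ℕ) (z : Fin r → ℕ),
      0 < r ∧ (r : ℤ) ≤ (m : ℤ) ^ 2 - 2 * m + 2 ∧
      Function.Injective P ∧ (∀ k, IsPermMatrix (P k)) ∧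
      (∀ k, 0 < z k) ∧ (∑ k, z k = n) ∧ X = ∑ k, z k • P k := by
  obtain ⟨m, rfl⟩ : ∃ m', m = m' + 1 := ⟨m - 1, by omega⟩
  obtain ⟨r, σ, z, hz, hsum, hX, hli⟩ :=
    exists_eq_sum_smul_permMatrix_linearIndependent ℚ (X := X) ⟨hrow, hcol⟩
  have hr : r ≤ m ^ 2 + 1 := by simpa using card_le_of_linearIndependent_permMatrix ℚ hli
  have hσ : Function.Injective σ :=
    Function.Injective.of_comp (f := fun τ : Equiv.Perm _ => τ.permMatrix ℚ) hli.injective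
  refine ⟨r, fun k => (σ k).permMatrix ℕ, z, ?_, ?_, permMatrix_injective.comp hσ,
    fun k => ⟨σ k, permMatrix_apply_eq_ite (σ k)⟩, hz, hsum, hX⟩
  · refine Nat.pos_of_ne_zero fun hr0 => ?_
    subst hr0
    simp at hsum
    omega
  · have hr' : (r : ℤ) ≤ m ^ 2 + 1 := by exact_mod_cast hr
    push_cast
    linear_combination hr'
end

section
/- Let X be an m×m bistochastic matrix and let n be a positive integer. Then there exists an m×m matrix P with nonnegative integer entries such that every row of P and every column of P sums to n, and |n·x_{i,j} − p_{i,j}| < 1 for all i, j ∈ {1,…,m}. -/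
open Finset Module

/-- A matrix is bistochastic (a frequency matrix) if its entries are
nonnegative and every row and every column sums to 1. -/
def Bistochastic {m : ℕ} (X : Matrix (Fin m) (Fin m) ℝ) : Prop :=
  (∀ i j, 0 ≤ X i j) ∧ (∀ i, ∑ j, X i j = 1) ∧ (∀ j, ∑ i, X i j = 1)

/-!
Start from `Y = n • X`, whose margins are integers, and move it inside the box
`∏ [⌊n x_ij⌋, ⌈n x_ij⌉]` without changing its margins. A line with an integral sum cannot
contain exactly one fractional entry, so the set `F` of fractional cells meets every row and
column in `0` or at least `2` cells; hence `#F` exceeds the number of independent margin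
constraints on matrices supported on `F`, and there is a nonzero `D` supported on `F` with zero
margins. Moving along `D` until the first entry of `F` reaches an integer stays in the box and
shrinks `F`. Iterating ends with an integral matrix in the box, which is the required `P`.
-/

theorem AddSubgroup.card_filter_notMem_ne_one_of_sum_mem {G ι : Type*} [AddCommGroup G]
    [Fintype ι] [DecidableEq ι] (S : AddSubgroup G) [DecidablePred (· ∈ S)] {f : ι → G}
    (hf : ∑ i, f i ∈ S) : #{i | f i ∉ S} ≠ 1 := by
  intro h
  obtain ⟨i₀, hi₀⟩ := Finset.card_eq_one.mp h
  have hmem : ∀ i, f i ∉ S ↔ i = i₀ := fun i => by simpa using congrArg (i ∈ ·) hi₀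
  refine (hmem i₀).2 rfl ?_
  rw [← add_sum_erase _ _ (mem_univ i₀)] at hf
  refine (add_mem_cancel_right (sum_mem fun i hi => ?_)).1 hf
  exact not_not.1 fun h => ne_of_mem_erase hi ((hmem i).1 h)

theorem two_mul_card_filter_nonempty_le_sum_card {ι κ : Type*} [Fintype ι] (s : ι → Finset κ)
    (hs : ∀ i, #(s i) ≠ 1) : 2 * #{i | (s i).Nonempty} ≤ ∑ i, #(s i) := by
  rw [mul_comm, ← smul_eq_mul, ← sum_const, ← sum_filter_add_sum_filter_not univ (s · |>.Nonempty)]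
  refine le_add_right (sum_le_sum fun i hi => ?_)
  have := (mem_filter.mp hi).2.card_pos
  have := hs i
  omega

section Rounding

variable {K : Type*} [Field K] [LinearOrder K] [FloorRing K]

def maxStep (y d : K) : K := ((if 0 < d then ⌈y⌉ else ⌊y⌋ : ℤ) - y) / d

theorem add_maxStep_mul_mem {y d : K} (hd : d ≠ 0) :
    y + maxStep y d * d ∈ (Int.castAddHom K).range := by
  rw [maxStep, div_mul_cancel₀ _ hd, add_sub_cancel]
  exact ⟨_, rfl⟩

variable [IsStrictOrderedRing K]

theorem abs_sub_lt_one_of_mem_Icc_floor_ceil {x : K} {z : ℤ} (hz : z ∈ Set.Icc ⌊x⌋ ⌈x⌉) :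
    |x - z| < 1 := by
  have hlo : (⌊x⌋ : K) ≤ z := by exact_mod_cast hz.1
  have hhi : (z : K) ≤ ⌈x⌉ := by exact_mod_cast hz.2
  rw [abs_sub_lt_iff]
  constructor <;> linarith [Int.sub_one_lt_floor x, Int.ceil_lt_add_one x]

theorem maxStep_pos {y d : K} (hy : y ∉ (Int.castAddHom K).range) (hd : d ≠ 0) :
    0 < maxStep y d := by
  unfold maxStep
  rcases hd.lt_or_gt with hd | hd
  · rw [if_neg hd.not_gt]
    exact div_pos_of_neg_of_neg (sub_neg.2 ((Int.floor_le y).lt_of_ne fun h => hy ⟨_, h⟩)) hd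
  · rw [if_pos hd]
    exact div_pos (sub_pos.2 ((Int.le_ceil y).lt_of_ne fun h => hy ⟨_, h.symm⟩)) hd

theorem add_mul_mem_Icc_floor_ceil_of_le_maxStep {y d t : K} (ht₀ : 0 ≤ t)
    (ht : t ≤ maxStep y d) : y + t * d ∈ Set.Icc (⌊y⌋ : K) ⌈y⌉ := by
  unfold maxStep at ht
  have hfl := Int.floor_le y
  have hcl := Int.le_ceil y
  rcases lt_trichotomy d 0 with hd | rfl | hd
  · rw [if_neg hd.not_gt, le_div_iff_of_neg hd] at ht
    constructor <;> nlinarith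
  · simpa using ⟨hfl, hcl⟩
  · rw [if_pos hd, le_div_iff₀ hd] at ht
    constructor <;> nlinarith

end Rounding

open Classical in
noncomputable def fractionalCells {ι κ K : Type*} [Fintype ι] [Fintype κ] [Ring K]
    (Y : Matrix ι κ K) : Finset (ι × κ) :=
  {p | Y p.1 p.2 ∉ (Int.castAddHom K).range}

theorem mem_fractionalCells {ι κ K : Type*} [Fintype ι] [Fintype κ] [Ring K] {Y : Matrix ι κ K}
    {i : ι} {j : κ} : (i, j) ∈ fractionalCells Y ↔ Y i j ∉ (Int.castAddHom K).range := by
  simp [fractionalCells]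

section Matrix

variable {ι κ : Type*} [Fintype ι] [Fintype κ] [DecidableEq ι] [DecidableEq κ]

theorem card_eq_sum_card_row (F : Finset (ι × κ)) : #F = ∑ i, #{j | (i, j) ∈ F} := by
  simp only [card_filter]
  rw [← Fintype.sum_prod_type' (f := fun i j => if (i, j) ∈ F then 1 else 0), ← card_filter]
  simp

theorem card_eq_sum_card_col (F : Finset (ι × κ)) : #F = ∑ j, #{i | (i, j) ∈ F} := by
  simp only [card_filter]
  rw [← Fintype.sum_prod_type_right' (f := fun i j => if (i, j) ∈ F then 1 else 0),
    ← card_filter]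
  simp

theorem exists_ne_zero_supported_sum_eq_zero_of_card_lt {K : Type*} [Field K]
    (F : Finset (ι × κ)) (R : Finset ι) (C : Finset κ) (hcard : #R + #C < #F) :
    ∃ D : Matrix ι κ K, D ≠ 0 ∧ (∀ i j, (i, j) ∉ F → D i j = 0) ∧
      (∀ i ∈ R, ∑ j, D i j = 0) ∧ (∀ j ∈ C, ∑ i, D i j = 0) := by
  let Φ : Matrix ι κ K →ₗ[K] ({p // p ∉ F} → K) × (R → K) × (C → K) :=
    { toFun := fun D => (fun p => D p.1.1 p.1.2, fun i => ∑ j, D i j, fun j => ∑ i, D i j)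
      map_add' := fun D E => by ext <;> simp [sum_add_distrib]
      map_smul' := fun c D => by ext <;> simp [mul_sum] }
  have hdim : finrank K (({p // p ∉ F} → K) × (R → K) × (C → K)) <
      finrank K (Matrix ι κ K) := by
    have := F.card_le_univ
    simp only [finrank_prod, finrank_fintype_fun_eq_card, finrank_matrix, Fintype.card_coe,
      Fintype.card_subtype_compl, Fintype.card_prod, finrank_self, mul_one] at *
    omega
  obtain ⟨D, hDker, hD⟩ :=
    Submodule.exists_mem_ne_zero_of_ne_bot (LinearMap.ker_ne_bot_of_finrank_lt (f := Φ) hdim)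
  simp only [Φ, LinearMap.mem_ker, LinearMap.coe_mk, AddHom.coe_mk, Prod.ext_iff, funext_iff,
    Prod.fst_zero, Prod.snd_zero, Pi.zero_apply, Subtype.forall, Prod.forall] at hDker
  exact ⟨D, hD, hDker⟩

theorem exists_ne_zero_supported_zero_margins {K : Type*} [Field K] (F : Finset (ι × κ))
    (hF : F.Nonempty) (hrow : ∀ i, #{j | (i, j) ∈ F} ≠ 1) (hcol : ∀ j, #{i | (i, j) ∈ F} ≠ 1) :
    ∃ D : Matrix ι κ K, D ≠ 0 ∧ (∀ i j, (i, j) ∉ F → D i j = 0) ∧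
      (∀ i, ∑ j, D i j = 0) ∧ (∀ j, ∑ i, D i j = 0) := by
  obtain ⟨⟨i₀, j₀⟩, h₀⟩ := hF
  set R : Finset ι := {i | ({j | (i, j) ∈ F} : Finset κ).Nonempty}
  set C : Finset κ := {j | ({i | (i, j) ∈ F} : Finset ι).Nonempty}
  have hR : 2 * #R ≤ #F :=
    card_eq_sum_card_row F ▸ two_mul_card_filter_nonempty_le_sum_card _ hrow
  have hC : 2 * #C ≤ #F :=
    card_eq_sum_card_col F ▸ two_mul_card_filter_nonempty_le_sum_card _ hcol
  have hj₀ : j₀ ∈ C := by simp only [C, mem_filter, mem_univ, true_and]; exact ⟨i₀, by simpa⟩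
  have hcard : #R + #(C.erase j₀) < #F := by
    have := card_pos.mpr ⟨j₀, hj₀⟩
    rw [card_erase_of_mem hj₀]
    omega
  -- The column sum at `j₀` is left free: it is forced by the others and the total.
  obtain ⟨D, hD, hoff, hRsum, hCsum⟩ :=
    exists_ne_zero_supported_sum_eq_zero_of_card_lt (K := K) F R (C.erase j₀) hcard
  have hrowsum : ∀ i, ∑ j, D i j = 0 := by
    intro i
    by_cases hi : i ∈ R
    · exact hRsum i hi
    · refine sum_eq_zero fun j _ => hoff i j fun h => hi ?_
      simp only [R, mem_filter, mem_univ, true_and]; exact ⟨j, by simpa⟩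
  have hcolsum : ∀ j ≠ j₀, ∑ i, D i j = 0 := by
    intro j hj
    by_cases hjC : j ∈ C
    · exact hCsum j (mem_erase.2 ⟨hj, hjC⟩)
    · refine sum_eq_zero fun i _ => hoff i j fun h => hjC ?_
      simp only [C, mem_filter, mem_univ, true_and]; exact ⟨i, by simpa⟩
  refine ⟨D, hD, hoff, hrowsum, fun j => ?_⟩
  obtain rfl | hj := eq_or_ne j j₀
  · calc ∑ i, D i j = ∑ j, ∑ i, D i j :=
          (sum_eq_single j (fun j' _ hj' => hcolsum j' hj') (by simp)).symm
      _ = ∑ i, ∑ j, D i j := sum_comm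
      _ = 0 := sum_eq_zero fun i _ => hrowsum i
  · exact hcolsum j hj

variable {K : Type*} [Field K] [LinearOrder K] [IsStrictOrderedRing K] [FloorRing K]

theorem exists_fractionalCells_ssubset (Y : Matrix ι κ K)
    (hrow : ∀ i, ∑ j, Y i j ∈ (Int.castAddHom K).range)
    (hcol : ∀ j, ∑ i, Y i j ∈ (Int.castAddHom K).range) (hY : (fractionalCells Y).Nonempty) :
    ∃ Y' : Matrix ι κ K, (∀ i, ∑ j, Y' i j = ∑ j, Y i j) ∧ (∀ j, ∑ i, Y' i j = ∑ i, Y i j) ∧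
      (∀ i j, Y' i j ∈ Set.Icc (⌊Y i j⌋ : K) ⌈Y i j⌉) ∧ fractionalCells Y' ⊂ fractionalCells Y := by
  classical
  obtain ⟨D, hD, hDF, hDrow, hDcol⟩ := exists_ne_zero_supported_zero_margins (K := K)
    (fractionalCells Y) hY
    (fun i => by
      simpa only [mem_fractionalCells] using
        (Int.castAddHom K).range.card_filter_notMem_ne_one_of_sum_mem (hrow i))
    (fun j => by
      simpa only [mem_fractionalCells] using
        (Int.castAddHom K).range.card_filter_notMem_ne_one_of_sum_mem (hcol j))
  have hsupp : ∀ i j, D i j ≠ 0 → (i, j) ∈ fractionalCells Y := fun i j => not_imp_comm.1 (hDF i j)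
  obtain ⟨i₀, j₀, hD₀⟩ : ∃ i j, D i j ≠ 0 := by
    by_contra! h
    exact hD (Matrix.ext h)
  obtain ⟨q, hq, hqmin⟩ := exists_min_image {p : ι × κ | D p.1 p.2 ≠ 0}
    (fun p => maxStep (Y p.1 p.2) (D p.1 p.2)) ⟨(i₀, j₀), by simpa using hD₀⟩
  rw [mem_filter] at hq
  set t := maxStep (Y q.1 q.2) (D q.1 q.2)
  have ht : 0 < t := maxStep_pos (mem_fractionalCells.1 (hsupp _ _ hq.2)) hq.2
  have hY' : ∀ i j, (Y + t • D) i j = Y i j + t * D i j := fun i j => rfl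
  refine ⟨Y + t • D, fun i => ?_, fun j => ?_, fun i j => ?_, ?_⟩
  · simp only [hY', sum_add_distrib, ← mul_sum, hDrow, mul_zero, add_zero]
  · simp only [hY', sum_add_distrib, ← mul_sum, hDcol, mul_zero, add_zero]
  · rw [hY']
    by_cases hij : D i j = 0
    · simpa [hij] using ⟨Int.floor_le _, Int.le_ceil _⟩
    · exact add_mul_mem_Icc_floor_ceil_of_le_maxStep ht.le (hqmin (i, j) (by simpa using hij))
  · have hsub : fractionalCells (Y + t • D) ⊆ fractionalCells Y := by
      rintro ⟨i, j⟩ hij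
      by_contra hij'
      rw [mem_fractionalCells, hY', hDF i j hij', mul_zero, add_zero] at hij
      exact hij' (mem_fractionalCells.2 hij)
    refine (ssubset_iff_of_subset hsub).2 ⟨q, hsupp _ _ hq.2, ?_⟩
    rw [mem_fractionalCells, hY', not_not]
    exact add_maxStep_mul_mem hq.2

theorem exists_int_matrix_sum_eq_mem_Icc_floor_ceil (Y : Matrix ι κ K)
    (hrow : ∀ i, ∑ j, Y i j ∈ (Int.castAddHom K).range)
    (hcol : ∀ j, ∑ i, Y i j ∈ (Int.castAddHom K).range) :
    ∃ P : Matrix ι κ ℤ, (∀ i, ∑ j, (P i j : K) = ∑ j, Y i j) ∧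
      (∀ j, ∑ i, (P i j : K) = ∑ i, Y i j) ∧ ∀ i j, P i j ∈ Set.Icc ⌊Y i j⌋ ⌈Y i j⌉ := by
  induction h : #(fractionalCells Y) using Nat.strong_induction_on generalizing Y with
  | _ N ih =>
  obtain hF | hF := (fractionalCells Y).eq_empty_or_nonempty
  · have hint : ∀ i j, (⌊Y i j⌋ : K) = Y i j := fun i j => by
      obtain ⟨z, hz⟩ := not_not.1 (mem_fractionalCells.not.1 (hF ▸ notMem_empty (i, j)))
      simp [← hz]
    exact ⟨fun i j => ⌊Y i j⌋, by simp [hint], by simp [hint],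
      fun i j => ⟨le_rfl, Int.floor_le_ceil _⟩⟩
  · obtain ⟨Y', hrow', hcol', hY', hlt⟩ := exists_fractionalCells_ssubset Y hrow hcol hF
    obtain ⟨P, hProw, hPcol, hP⟩ := ih _ (h ▸ card_lt_card hlt) Y'
      (fun i => hrow' i ▸ hrow i) (fun j => hcol' j ▸ hcol j) rfl
    exact ⟨P, fun i => (hProw i).trans (hrow' i), fun j => (hPcol j).trans (hcol' j),
      fun i j => Set.Icc_subset_Icc (Int.le_floor.2 (hY' i j).1) (Int.ceil_le.2 (hY' i j).2)
        (hP i j)⟩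

end Matrix

theorem rounding_position_matrix_general {m : ℕ} (X : Matrix (Fin m) (Fin m) ℝ)
    (hX : Bistochastic X) (n : ℕ) :
    ∃ P : Matrix (Fin m) (Fin m) ℕ,
      (∀ i, ∑ j, P i j = n) ∧ (∀ j, ∑ i, P i j = n) ∧
      ∀ i j, |(n : ℝ) * X i j - (P i j : ℝ)| < 1 := by
  obtain ⟨hnonneg, hrow, hcol⟩ := hX
  have hrowY : ∀ i, ∑ j, (n : ℝ) * X i j = n := fun i => by rw [← mul_sum, hrow, mul_one]
  have hcolY : ∀ j, ∑ i, (n : ℝ) * X i j = n := fun j => by rw [← mul_sum, hcol, mul_one]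
  obtain ⟨P, hProw, hPcol, hP⟩ := exists_int_matrix_sum_eq_mem_Icc_floor_ceil
    (fun i j => (n : ℝ) * X i j) (fun i => by rw [hrowY]; exact ⟨n, by simp⟩)
    (fun j => by rw [hcolY]; exact ⟨n, by simp⟩)
  have hP₀ : ∀ i j, 0 ≤ P i j := fun i j =>
    (Int.floor_nonneg.2 (mul_nonneg n.cast_nonneg (hnonneg i j))).trans (hP i j).1
  have hcast : ∀ i j, (((P i j).toNat : ℕ) : ℝ) = P i j := fun i j => by
    exact_mod_cast Int.toNat_of_nonneg (hP₀ i j)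
  refine ⟨fun i j => (P i j).toNat, fun i => ?_, fun j => ?_, fun i j => ?_⟩
  · exact_mod_cast (by simpa [hcast, hrowY] using hProw i : ((∑ j, (P i j).toNat : ℕ) : ℝ) = n)
  · exact_mod_cast (by simpa [hcast, hcolY] using hPcol j : ((∑ i, (P i j).toNat : ℕ) : ℝ) = n)
  · rw [hcast]
    exact abs_sub_lt_one_of_mem_Icc_floor_ceil (hP i j)

theorem rounding_position_matrix {m : ℕ} (X : Matrix (Fin m) (Fin m) ℝ)
    (hX : Bistochastic X) (n : ℕ) (hn : 0 < n) :
    ∃ P : Matrix (Fin m) (Fin m) ℕ,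
      (∀ i, ∑ j, P i j = n) ∧ (∀ j, ∑ i, P i j = n) ∧
      ∀ i j, |(n : ℝ) * X i j - (P i j : ℝ)| < 1 :=
  rounding_position_matrix_general X hX n
end

section
/- Let Y be an m×m matrix with real entries in the interval [0,1] such that every row sum of Y and every column sum of Y is an integer. Then there exists an m×m matrix D with entries in {0,1} such that for every i, the i-th row sum of D equals the i-th row sum of Y, and for every j, the j-th column sum of D equals the j-th column sum of Y. -/
open Finset

private lemma int_sum {α : Type*} (s : Finset α) (f : α → ℝ)
    (h : ∀ x ∈ s, ∃ z : ℤ, f x = z) : ∃ z : ℤ, ∑ x ∈ s, f x = z := by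
  classical
  induction s using Finset.induction_on with
  | empty => exact ⟨0, by simp⟩
  | @insert a s hx ih =>
    obtain ⟨z1, hz1⟩ := h _ (mem_insert_self _ _)
    obtain ⟨z2, hz2⟩ := ih fun x hxs => h x (mem_insert_of_mem hxs)
    exact ⟨z1 + z2, by rw [Finset.sum_insert hx, hz1, hz2]; push_cast; ring⟩

private lemma exists_circulation {m : ℕ} (F : Finset (Fin m × Fin m)) (hne : F.Nonempty)
    (hr : ∀ e ∈ F, 2 ≤ (F.filter fun x => x.1 = e.1).card)
    (hc : ∀ e ∈ F, 2 ≤ (F.filter fun x => x.2 = e.2).card) :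
    ∃ Z : Matrix (Fin m) (Fin m) ℝ, Z ≠ 0 ∧ (∀ i j, (i, j) ∉ F → Z i j = 0) ∧
      (∀ i, ∑ j, Z i j = 0) ∧ (∀ j, ∑ i, Z i j = 0) := by
  classical
  obtain ⟨e0, he0⟩ := hne
  set R : Finset (Fin m) := F.image Prod.fst with hRdef
  set C : Finset (Fin m) := F.image Prod.snd with hCdef
  have hi0R : e0.1 ∈ R := mem_image_of_mem _ he0
  have hcardR : 2 * R.card ≤ F.card := by
    have hfib : F.card = ∑ i ∈ R, (F.filter fun x => x.1 = i).card :=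
      card_eq_sum_card_fiberwise (fun x hx => mem_image_of_mem _ hx)
    calc 2 * R.card = ∑ _i ∈ R, 2 := by rw [Finset.sum_const, smul_eq_mul, mul_comm]
    _ ≤ ∑ i ∈ R, (F.filter fun x => x.1 = i).card := by
        refine Finset.sum_le_sum fun i hi => ?_
        obtain ⟨e, heF, hei⟩ := mem_image.1 hi
        have := hr e heF
        rwa [hei] at this
    _ = F.card := hfib.symm
  have hcardC : 2 * C.card ≤ F.card := by
    have hfib : F.card = ∑ j ∈ C, (F.filter fun x => x.2 = j).card :=
      card_eq_sum_card_fiberwise (fun x hx => mem_image_of_mem _ hx)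
    calc 2 * C.card = ∑ _j ∈ C, 2 := by rw [Finset.sum_const, smul_eq_mul, mul_comm]
    _ ≤ ∑ j ∈ C, (F.filter fun x => x.2 = j).card := by
        refine Finset.sum_le_sum fun j hj => ?_
        obtain ⟨e, heF, hej⟩ := mem_image.1 hj
        have := hc e heF
        rwa [hej] at this
    _ = F.card := hfib.symm
  set R' : Finset (Fin m) := R.erase e0.1 with hR'def
  have hcard : R'.card + C.card < F.card := by
    have h1 : R'.card = R.card - 1 := card_erase_of_mem hi0R
    have h2 : 1 ≤ R.card := card_pos.2 ⟨e0.1, hi0R⟩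
    omega
  -- the linear map (row sums on R', column sums on C)
  let φ : ({e // e ∈ F} → ℝ) →ₗ[ℝ] ({i // i ∈ R'} → ℝ) × ({j // j ∈ C} → ℝ) :=
    { toFun := fun z =>
        (fun i => ∑ e ∈ F.attach, if (e : Fin m × Fin m).1 = i.1 then z e else 0,
         fun j => ∑ e ∈ F.attach, if (e : Fin m × Fin m).2 = j.1 then z e else 0)
      map_add' := by
        intro x y
        refine Prod.ext ?_ ?_ <;> funext t <;>
        · simp only [Pi.add_apply, Prod.fst_add, Prod.snd_add]
          rw [← Finset.sum_add_distrib]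
          exact Finset.sum_congr rfl fun e _ => by split <;> simp
      map_smul' := by
        intro c x
        refine Prod.ext ?_ ?_ <;> funext t <;>
        · simp only [Pi.smul_apply, smul_eq_mul, RingHom.id_apply, Prod.smul_fst,
            Prod.smul_snd]
          rw [Finset.mul_sum]
          exact Finset.sum_congr rfl fun e _ => by split <;> simp }
  have hker : ∃ z : {e // e ∈ F} → ℝ, z ≠ 0 ∧ φ z = 0 := by
    by_contra hcon
    push_neg at hcon
    have hinj : Function.Injective φ := by
      rw [← LinearMap.ker_eq_bot, LinearMap.ker_eq_bot']
      intro z hz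
      by_contra hz0
      exact (hcon z hz0) hz
    have hle := LinearMap.finrank_le_finrank_of_injective hinj
    rw [Module.finrank_fintype_fun_eq_card] at hle
    have hle2 : Fintype.card {e // e ∈ F} ≤
        Module.finrank ℝ ({i // i ∈ R'} → ℝ) + Module.finrank ℝ ({j // j ∈ C} → ℝ) := by
      rw [← Module.finrank_prod]; exact hle
    rw [Module.finrank_fintype_fun_eq_card, Module.finrank_fintype_fun_eq_card,
      Fintype.card_coe, Fintype.card_coe, Fintype.card_coe] at hle2
    omega
  obtain ⟨z, hz0, hzker⟩ := hker
  set Z : Matrix (Fin m) (Fin m) ℝ :=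
    fun i j => if h : (i, j) ∈ F then z ⟨(i, j), h⟩ else 0 with hZdef
  have hsupp : ∀ i j, (i, j) ∉ F → Z i j = 0 := fun i j h => dif_neg h
  -- pointwise expansion
  have hpt : ∀ i j, Z i j = ∑ e ∈ F.attach, if (e : Fin m × Fin m) = (i, j) then z e else 0 := by
    intro i j
    by_cases h : (i, j) ∈ F
    · rw [show Z i j = z ⟨(i, j), h⟩ from dif_pos h]
      rw [Finset.sum_eq_single (⟨(i, j), h⟩ : {e // e ∈ F})]
      · simp
      · intro b _ hb
        exact if_neg fun hbe => hb (Subtype.ext hbe)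
      · intro hb; exact absurd (mem_attach _ _) hb
    · rw [hsupp i j h]
      symm
      refine Finset.sum_eq_zero fun e _ => if_neg fun hce => ?_
      exact h (hce ▸ e.2)
  -- row sums equal the row component, column sums the column component
  have hrowsum : ∀ i, ∑ j, Z i j = ∑ e ∈ F.attach, if (e : Fin m × Fin m).1 = i then z e else 0 := by
    intro i
    simp only [hpt]
    rw [Finset.sum_comm]
    refine Finset.sum_congr rfl fun e _ => ?_
    by_cases h : (e : Fin m × Fin m).1 = i <;>
      simp [Prod.ext_iff, h, Finset.sum_ite_eq]
  have hcolsum : ∀ j, ∑ i, Z i j = ∑ e ∈ F.attach, if (e : Fin m × Fin m).2 = j then z e else 0 := by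
    intro j
    simp only [hpt]
    rw [Finset.sum_comm]
    refine Finset.sum_congr rfl fun e _ => ?_
    by_cases h : (e : Fin m × Fin m).2 = j <;>
      simp [Prod.ext_iff, h, Finset.sum_ite_eq]
  have hcolzero : ∀ j, ∑ i, Z i j = 0 := by
    intro j
    by_cases hj : j ∈ C
    · have := congrFun (congrArg Prod.snd hzker) ⟨j, hj⟩
      simpa [φ, hcolsum j] using this
    · refine Finset.sum_eq_zero fun i _ => hsupp i j fun hm => hj (mem_image_of_mem _ hm)
  have hrowzero' : ∀ i, i ≠ e0.1 → ∑ j, Z i j = 0 := by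
    intro i hi
    by_cases hiR : i ∈ R
    · have hiR' : i ∈ R' := mem_erase.2 ⟨hi, hiR⟩
      have := congrFun (congrArg Prod.fst hzker) ⟨i, hiR'⟩
      simpa [φ, hrowsum i] using this
    · refine Finset.sum_eq_zero fun j _ => hsupp i j fun hm => hiR (mem_image_of_mem _ hm)
  have hrowzero : ∀ i, ∑ j, Z i j = 0 := by
    intro i
    by_cases hi : i = e0.1
    · subst hi
      have htot : ∑ i', ∑ j, Z i' j = 0 := by
        rw [Finset.sum_comm]
        exact Finset.sum_eq_zero fun j _ => hcolzero j
      rw [Finset.sum_eq_single e0.1] at htot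
      · exact htot
      · intro b _ hb; exact hrowzero' b hb
      · intro hb; exact absurd (mem_univ _) hb
    · exact hrowzero' i hi
  refine ⟨Z, ?_, hsupp, hrowzero, hcolzero⟩
  intro hZ0
  obtain ⟨e, he⟩ := Function.ne_iff.1 hz0
  apply he
  have : Z (e : Fin m × Fin m).1 (e : Fin m × Fin m).2 = z e := dif_pos e.2
  rw [hZ0] at this
  simpa using this.symm

theorem rounding_zero_one {m : ℕ} (Y : Matrix (Fin m) (Fin m) ℝ)
    (hY : ∀ i j, Y i j ∈ Set.Icc (0 : ℝ) 1)
    (hrow : ∀ i, ∃ z : ℤ, ∑ j, Y i j = z)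
    (hcol : ∀ j, ∃ z : ℤ, ∑ i, Y i j = z) :
    ∃ D : Matrix (Fin m) (Fin m) ℝ,
      (∀ i j, D i j = 0 ∨ D i j = 1) ∧
      (∀ i, ∑ j, D i j = ∑ j, Y i j) ∧
      (∀ j, ∑ i, D i j = ∑ i, Y i j) := by
  classical
  suffices H : ∀ n (W : Matrix (Fin m) (Fin m) ℝ),
      (∀ i j, W i j ∈ Set.Icc (0 : ℝ) 1) → (∀ i, ∃ z : ℤ, ∑ j, W i j = z) →
      (∀ j, ∃ z : ℤ, ∑ i, W i j = z) →
      (univ.filter fun e : Fin m × Fin m => W e.1 e.2 ≠ 0 ∧ W e.1 e.2 ≠ 1).card = n →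
      ∃ D : Matrix (Fin m) (Fin m) ℝ,
        (∀ i j, D i j = 0 ∨ D i j = 1) ∧
        (∀ i, ∑ j, D i j = ∑ j, W i j) ∧
        (∀ j, ∑ i, D i j = ∑ i, W i j) by
    exact H _ Y hY hrow hcol rfl
  intro n
  induction n using Nat.strong_induction_on with
  | _ n ih =>
    intro W hW hrow hcol hcard
    set F : Finset (Fin m × Fin m) :=
      univ.filter (fun e : Fin m × Fin m => W e.1 e.2 ≠ 0 ∧ W e.1 e.2 ≠ 1) with hFdef
    by_cases hF : F = ∅
    · refine ⟨W, fun i j => ?_, fun _ => rfl, fun _ => rfl⟩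
      by_contra hcon
      push_neg at hcon
      have : (i, j) ∈ F := by simp [hFdef, hcon.1, hcon.2]
      simp [hF] at this
    · have hFne : F.Nonempty := nonempty_iff_ne_empty.2 hF
      have hrdeg : ∀ e ∈ F, 2 ≤ (F.filter fun x => x.1 = e.1).card := by
        intro e heF
        by_contra hlt
        push_neg at hlt
        have he' : e ∈ F.filter (fun x => x.1 = e.1) := mem_filter.2 ⟨heF, rfl⟩
        have h1 : (F.filter fun x => x.1 = e.1).card = 1 := by
          have := card_pos.2 ⟨e, he'⟩; omega
        obtain ⟨a, ha⟩ := card_eq_one.1 h1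
        have hea : e = a := by rw [ha] at he'; simpa using he'
        subst hea
        have hsum : W e.1 e.2 + ∑ j ∈ univ.erase e.2, W e.1 j = ∑ j, W e.1 j :=
          Finset.add_sum_erase _ _ (mem_univ e.2)
        have hrest : ∃ z : ℤ, ∑ j ∈ univ.erase e.2, W e.1 j = z := by
          apply int_sum
          intro j hj
          have hjne : j ≠ e.2 := (mem_erase.1 hj).1
          have hnotF : (e.1, j) ∉ F := by
            intro hmem
            have h2 : (e.1, j) ∈ F.filter (fun x => x.1 = e.1) := mem_filter.2 ⟨hmem, rfl⟩
            rw [ha, mem_singleton] at h2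
            exact hjne (congrArg Prod.snd h2)
          rw [hFdef] at hnotF
          simp only [mem_filter, mem_univ, true_and, not_and_or, not_not] at hnotF
          rcases hnotF with h0 | h1
          · exact ⟨0, by simpa using h0⟩
          · exact ⟨1, by simpa using h1⟩
        obtain ⟨z1, hz1⟩ := hrow e.1
        obtain ⟨z2, hz2⟩ := hrest
        have hval : W e.1 e.2 = ((z1 - z2 : ℤ) : ℝ) := by
          push_cast; rw [← hz1, ← hz2]; linarith
        have hmemF := heF
        rw [hFdef] at hmemF
        simp only [mem_filter, mem_univ, true_and] at hmemF
        obtain ⟨hb0, hb1⟩ := hW e.1 e.2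
        have h0 : (0 : ℤ) ≤ z1 - z2 := by exact_mod_cast hval ▸ hb0
        have h1' : (z1 - z2 : ℤ) ≤ 1 := by exact_mod_cast hval ▸ hb1
        interval_cases h : (z1 - z2 : ℤ)
        · exact hmemF.1 (by rw [hval]; norm_num)
        · exact hmemF.2 (by rw [hval]; norm_num)
      have hcdeg : ∀ e ∈ F, 2 ≤ (F.filter fun x => x.2 = e.2).card := by
        intro e heF
        by_contra hlt
        push_neg at hlt
        have he' : e ∈ F.filter (fun x => x.2 = e.2) := mem_filter.2 ⟨heF, rfl⟩
        have h1 : (F.filter fun x => x.2 = e.2).card = 1 := by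
          have := card_pos.2 ⟨e, he'⟩; omega
        obtain ⟨a, ha⟩ := card_eq_one.1 h1
        have hea : e = a := by rw [ha] at he'; simpa using he'
        subst hea
        have hsum : W e.1 e.2 + ∑ i ∈ univ.erase e.1, W i e.2 = ∑ i, W i e.2 :=
          Finset.add_sum_erase _ (fun i => W i e.2) (mem_univ e.1)
        have hrest : ∃ z : ℤ, ∑ i ∈ univ.erase e.1, W i e.2 = z := by
          apply int_sum
          intro i hi
          have hine : i ≠ e.1 := (mem_erase.1 hi).1
          have hnotF : (i, e.2) ∉ F := by
            intro hmem
            have h2 : (i, e.2) ∈ F.filter (fun x => x.2 = e.2) := mem_filter.2 ⟨hmem, rfl⟩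
            rw [ha, mem_singleton] at h2
            exact hine (congrArg Prod.fst h2)
          rw [hFdef] at hnotF
          simp only [mem_filter, mem_univ, true_and, not_and_or, not_not] at hnotF
          rcases hnotF with h0 | h1
          · exact ⟨0, by simpa using h0⟩
          · exact ⟨1, by simpa using h1⟩
        obtain ⟨z1, hz1⟩ := hcol e.2
        obtain ⟨z2, hz2⟩ := hrest
        have hval : W e.1 e.2 = ((z1 - z2 : ℤ) : ℝ) := by
          push_cast; rw [← hz1, ← hz2]; linarith
        have hmemF := heF
        rw [hFdef] at hmemF
        simp only [mem_filter, mem_univ, true_and] at hmemF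
        obtain ⟨hb0, hb1⟩ := hW e.1 e.2
        have h0 : (0 : ℤ) ≤ z1 - z2 := by exact_mod_cast hval ▸ hb0
        have h1' : (z1 - z2 : ℤ) ≤ 1 := by exact_mod_cast hval ▸ hb1
        interval_cases h : (z1 - z2 : ℤ)
        · exact hmemF.1 (by rw [hval]; norm_num)
        · exact hmemF.2 (by rw [hval]; norm_num)
      obtain ⟨Z, hZne, hZsupp, hZrow, hZcol⟩ := exists_circulation F hFne hrdeg hcdeg
      set S : Finset (Fin m × Fin m) :=
        univ.filter (fun e : Fin m × Fin m => Z e.1 e.2 ≠ 0) with hSdef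
      have hSsub : S ⊆ F := by
        intro e heS
        rw [hSdef, mem_filter] at heS
        by_contra heF
        exact heS.2 (hZsupp e.1 e.2 heF)
      have hSne : S.Nonempty := by
        rcases Function.ne_iff.1 hZne with ⟨i, hi⟩
        rcases Function.ne_iff.1 hi with ⟨j, hj⟩
        exact ⟨(i, j), mem_filter.2 ⟨mem_univ _, by simpa using hj⟩⟩
      -- fractional bounds on S
      have hfrac : ∀ e ∈ S, 0 < W e.1 e.2 ∧ W e.1 e.2 < 1 := by
        intro e heS
        have heF := hSsub heS
        rw [hFdef, mem_filter] at heF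
        obtain ⟨h0, h1⟩ := hW e.1 e.2
        exact ⟨lt_of_le_of_ne h0 (Ne.symm heF.2.1), lt_of_le_of_ne h1 heF.2.2⟩
      set b : (Fin m × Fin m) → ℝ := fun e =>
        if 0 < Z e.1 e.2 then (1 - W e.1 e.2) / Z e.1 e.2 else W e.1 e.2 / (-Z e.1 e.2) with hbdef
      have hbpos : ∀ e ∈ S, 0 < b e := by
        intro e heS
        obtain ⟨h0, h1⟩ := hfrac e heS
        have hz : Z e.1 e.2 ≠ 0 := by rw [hSdef, mem_filter] at heS; exact heS.2
        simp only [hbdef]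
        by_cases hzp : 0 < Z e.1 e.2
        · rw [if_pos hzp]; exact div_pos (by linarith) hzp
        · rw [if_neg hzp]
          have hzn : Z e.1 e.2 < 0 := lt_of_le_of_ne (not_lt.1 hzp) hz
          exact div_pos h0 (by linarith)
      obtain ⟨e0, he0S, he0min⟩ := S.exists_min_image b hSne
      set t : ℝ := b e0 with htdef
      have ht : 0 < t := hbpos e0 he0S
      set W' : Matrix (Fin m) (Fin m) ℝ := fun i j => W i j + t * Z i j with hW'def
      have hunch : ∀ e : Fin m × Fin m, e ∉ S → W' e.1 e.2 = W e.1 e.2 := by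
        intro e heS
        have : Z e.1 e.2 = 0 := by
          by_contra h
          exact heS (by simp [hSdef, h])
        simp [hW'def, this]
      -- bounds for entries in S
      have hboundS : ∀ e ∈ S, 0 ≤ W' e.1 e.2 ∧ W' e.1 e.2 ≤ 1 := by
        intro e heS
        obtain ⟨h0, h1⟩ := hfrac e heS
        have hz : Z e.1 e.2 ≠ 0 := by rw [hSdef, mem_filter] at heS; exact heS.2
        have hmin := he0min e heS
        rw [hW'def]
        by_cases hzp : 0 < Z e.1 e.2
        · have hbe : b e = (1 - W e.1 e.2) / Z e.1 e.2 := if_pos hzp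
          have h2 : t * Z e.1 e.2 ≤ (1 - W e.1 e.2) / Z e.1 e.2 * Z e.1 e.2 := by
            apply mul_le_mul_of_nonneg_right _ (le_of_lt hzp)
            rw [← hbe]; exact hmin
          rw [div_mul_cancel₀ _ (ne_of_gt hzp)] at h2
          have h3 : 0 ≤ t * Z e.1 e.2 := le_of_lt (mul_pos ht hzp)
          constructor <;> simp only <;> linarith
        · have hzn : Z e.1 e.2 < 0 := lt_of_le_of_ne (not_lt.1 hzp) hz
          have hbe : b e = W e.1 e.2 / (-Z e.1 e.2) := if_neg hzp
          have h2 : b e * Z e.1 e.2 ≤ t * Z e.1 e.2 := by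
            apply mul_le_mul_of_nonpos_right hmin (le_of_lt hzn)
          have h4 : b e * Z e.1 e.2 = -W e.1 e.2 := by
            rw [hbe, div_mul_eq_mul_div, div_neg, mul_div_assoc, div_self hz, mul_one]
          have h3 : t * Z e.1 e.2 < 0 := mul_neg_of_pos_of_neg ht hzn
          constructor <;> simp only <;> linarith
      have hW' : ∀ i j, W' i j ∈ Set.Icc (0 : ℝ) 1 := by
        intro i j
        by_cases h : (i, j) ∈ S
        · exact ⟨(hboundS _ h).1, (hboundS _ h).2⟩
        · rw [show W' i j = W i j from hunch (i, j) h]; exact hW i j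
      -- e0 becomes integral
      have he0int : W' e0.1 e0.2 = 0 ∨ W' e0.1 e0.2 = 1 := by
        have hz : Z e0.1 e0.2 ≠ 0 := by rw [hSdef, mem_filter] at he0S; exact he0S.2
        rw [hW'def, htdef, hbdef]
        by_cases hzp : 0 < Z e0.1 e0.2
        · right
          simp only [if_pos hzp]
          rw [div_mul_cancel₀ _ (ne_of_gt hzp)]
          ring
        · left
          simp only [if_neg hzp]
          have : W e0.1 e0.2 / -Z e0.1 e0.2 * Z e0.1 e0.2 = -W e0.1 e0.2 := by
            rw [div_mul_eq_mul_div, div_neg, mul_div_assoc, div_self hz, mul_one]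
          rw [this]; ring
      -- row and column sums preserved
      have hrow' : ∀ i, ∑ j, W' i j = ∑ j, W i j := by
        intro i
        rw [hW'def]
        simp only
        rw [Finset.sum_add_distrib, ← Finset.mul_sum, hZrow i, mul_zero, add_zero]
      have hcol' : ∀ j, ∑ i, W' i j = ∑ i, W i j := by
        intro j
        rw [hW'def]
        simp only
        rw [Finset.sum_add_distrib, ← Finset.mul_sum, hZcol j, mul_zero, add_zero]
      -- the new fractional set is strictly smaller
      set F' : Finset (Fin m × Fin m) :=
        univ.filter (fun e : Fin m × Fin m => W' e.1 e.2 ≠ 0 ∧ W' e.1 e.2 ≠ 1) with hF'def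
      have hF'sub : F' ⊆ F.erase e0 := by
        intro e heF'
        rw [hF'def, mem_filter] at heF'
        refine mem_erase.2 ⟨?_, ?_⟩
        · intro hee0
          subst hee0
          rcases he0int with h | h
          · exact heF'.2.1 h
          · exact heF'.2.2 h
        · by_cases heS : e ∈ S
          · exact hSsub heS
          · rw [hFdef, mem_filter]
            refine ⟨mem_univ _, ?_, ?_⟩
            · rw [← hunch e heS]; exact heF'.2.1
            · rw [← hunch e heS]; exact heF'.2.2
      have hlt : F'.card < n := by
        have h1 : F'.card ≤ (F.erase e0).card := card_le_card hF'sub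
        have h2 : (F.erase e0).card = F.card - 1 := card_erase_of_mem (hSsub he0S)
        have h3 : 1 ≤ F.card := card_pos.2 ⟨e0, hSsub he0S⟩
        omega
      obtain ⟨D, hD01, hDrow, hDcol⟩ := ih F'.card hlt W' hW'
        (fun i => (hrow' i) ▸ hrow i) (fun j => (hcol' j) ▸ hcol j) rfl
      exact ⟨D, hD01, fun i => (hDrow i).trans (hrow' i), fun j => (hDcol j).trans (hcol' j)⟩
end

section
/- Let x, y ∈ ℝ^m have nonnegative entries with Σ_{i=1}^m x_i = Σ_{i=1}^m y_i. Consider the set of m×m matrices γ with nonnegative real entries whose i-th row sums to x_i for every i and whose j-th column sums to y_j for every j. Then the infimum over all such γ of the transport cost Σ_{i,j} γ_{i,j}·|i − j| is attained, and its minimum value equals Σ_{k=1}^m |Σ_{i=1}^k x_i − Σ_{i=1}^k y_i|, i.e., the ℓ1-distance between the prefix-sum vectors of x and y. -/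
open Finset

namespace EmdAux

variable {m : ℕ}


/-- prefix sum of `x` up to (exclusive) position `n : ℕ`. -/
noncomputable def pre (x : Fin m → ℝ) (n : ℕ) : ℝ :=
  ∑ i ∈ Finset.range n, if h : i < m then x ⟨i, h⟩ else 0

lemma pre_zero (x : Fin m → ℝ) : pre x 0 = 0 := by simp [pre]

lemma pre_succ (x : Fin m → ℝ) (i : Fin m) :
    pre x ((i : ℕ) + 1) = pre x i + x i := by
  simp [pre, Finset.sum_range_succ, i.isLt]

lemma pre_mono (x : Fin m → ℝ) (hx : ∀ i, 0 ≤ x i) : Monotone (pre x) := by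
  intro a b hab
  refine Finset.sum_le_sum_of_subset_of_nonneg (Finset.range_subset_range.2 hab) ?_
  intro i _ _
  split
  · exact hx _
  · exact le_refl 0

lemma pre_nonneg (x : Fin m → ℝ) (hx : ∀ i, 0 ≤ x i) (n : ℕ) : 0 ≤ pre x n := by
  have := pre_mono x hx (Nat.zero_le n)
  simpa [pre_zero] using this

lemma pre_eq (x : Fin m → ℝ) (n : ℕ) :
    pre x n = ∑ i ∈ univ.filter (fun i : Fin m => (i : ℕ) < n), x i := by
  induction n with
  | zero => simp [pre]
  | succ n ih =>
    rw [pre, Finset.sum_range_succ, ← pre, ih]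
    by_cases h : n < m
    · rw [dif_pos h]
      have hins : univ.filter (fun i : Fin m => (i : ℕ) < n + 1)
          = insert (⟨n, h⟩ : Fin m) (univ.filter (fun i : Fin m => (i : ℕ) < n)) := by
        ext i
        simp only [mem_filter, mem_univ, true_and, mem_insert, Fin.ext_iff]
        omega
      rw [hins, Finset.sum_insert (by simp)]
      ring
    · rw [dif_neg h]
      have : univ.filter (fun i : Fin m => (i : ℕ) < n + 1)
          = univ.filter (fun i : Fin m => (i : ℕ) < n) := by
        ext i
        simp only [mem_filter, mem_univ, true_and]
        have := i.isLt
        omega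
      rw [this]
      ring

lemma pre_fin (x : Fin m → ℝ) (k : Fin m) :
    ∑ i ∈ Finset.Iic k, x i = pre x ((k : ℕ) + 1) := by
  rw [pre_eq]
  congr 1
  ext i
  simp only [Finset.mem_Iic, mem_filter, mem_univ, true_and, Fin.le_def, Nat.lt_succ_iff]

lemma pre_top (x : Fin m → ℝ) : pre x m = ∑ i, x i := by
  rw [pre_eq]
  congr 1
  ext i
  simp [i.isLt]

lemma clamp_diff {a b r s : ℝ} (hab : a ≤ b) (hrs : r ≤ s) :
    max 0 (min b s - max a r) = min b (max a s) - min b (max a r) := by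
  rcases le_total s a with h | h <;> rcases le_total b r with h' | h' <;>
    simp only [min_def, max_def] <;> split_ifs <;> linarith



/-- indicator: 1 if i ≤ k -/
noncomputable def e (i k : Fin m) : ℝ := if (i : ℕ) ≤ (k : ℕ) then 1 else 0

lemma count_aux (i j : Fin m) (hji : (j : ℕ) ≤ (i : ℕ)) :
    ∑ k : Fin m, |e i k - e j k| = (((i : ℕ) - (j : ℕ) : ℕ) : ℝ) := by
  have h1 : ∀ k : Fin m, |e i k - e j k|
      = if (j : ℕ) ≤ (k : ℕ) ∧ (k : ℕ) < (i : ℕ) then (1 : ℝ) else 0 := by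
    intro k
    unfold e
    split_ifs <;> simp_all <;> omega
  simp only [h1]
  rw [Fin.sum_univ_eq_sum_range (fun n : ℕ => if (j : ℕ) ≤ n ∧ n < (i : ℕ) then (1:ℝ) else 0) m]
  rw [Finset.sum_ite, Finset.sum_const_zero, add_zero, Finset.sum_const]
  have : (Finset.range m).filter (fun n => (j : ℕ) ≤ n ∧ n < (i : ℕ))
      = Finset.Ico (j : ℕ) (i : ℕ) := by
    ext n
    simp only [mem_filter, Finset.mem_range, Finset.mem_Ico]
    have := i.isLt
    omega
  rw [this]
  simp [Nat.card_Ico]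

lemma abs_dist (i j : Fin m) :
    |((i : ℕ) : ℝ) - ((j : ℕ) : ℝ)| = ∑ k : Fin m, |e i k - e j k| := by
  rcases le_total (j : ℕ) (i : ℕ) with h | h
  · rw [count_aux i j h, Nat.cast_sub h, abs_of_nonneg (by
      simp only [sub_nonneg]; exact_mod_cast h)]
  · rw [abs_sub_comm]
    have : ∀ k : Fin m, |e i k - e j k| = |e j k - e i k| := fun k => abs_sub_comm _ _
    simp only [this]
    rw [count_aux j i h, Nat.cast_sub h, abs_of_nonneg (by
      simp only [sub_nonneg]; exact_mod_cast h)]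






lemma cost_eq (g : Matrix (Fin m) (Fin m) ℝ) :
    (∑ i, ∑ j, g i j * |((i : ℕ) : ℝ) - ((j : ℕ) : ℝ)|)
      = ∑ k : Fin m, ∑ i, ∑ j, g i j * |e i k - e j k| := by
  simp_rw [abs_dist, Finset.mul_sum]
  calc ∑ i : Fin m, ∑ j : Fin m, ∑ k : Fin m, g i j * |e i k - e j k|
      = ∑ i : Fin m, ∑ k : Fin m, ∑ j : Fin m, g i j * |e i k - e j k| :=
        Finset.sum_congr rfl fun i _ => Finset.sum_comm
    _ = ∑ k : Fin m, ∑ i : Fin m, ∑ j : Fin m, g i j * |e i k - e j k| :=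
        Finset.sum_comm

lemma marginal_row (g : Matrix (Fin m) (Fin m) ℝ) (x : Fin m → ℝ)
    (hrow : ∀ i, ∑ j, g i j = x i) (k : Fin m) :
    ∑ i, ∑ j, g i j * e i k = pre x ((k : ℕ) + 1) := by
  rw [Finset.sum_congr rfl (fun i (_ : i ∈ univ) => by
    rw [← Finset.sum_mul, hrow] : ∀ i ∈ univ, ∑ j, g i j * e i k = x i * e i k)]
  simp only [e, mul_ite, mul_one, mul_zero]
  rw [pre_eq, Finset.sum_ite, Finset.sum_const_zero, add_zero]
  congr 1
  ext i
  simp [Nat.lt_succ_iff]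

lemma marginal_col (g : Matrix (Fin m) (Fin m) ℝ) (y : Fin m → ℝ)
    (hcol : ∀ j, ∑ i, g i j = y j) (k : Fin m) :
    ∑ i, ∑ j, g i j * e j k = pre y ((k : ℕ) + 1) := by
  rw [Finset.sum_comm]
  rw [Finset.sum_congr rfl (fun j (_ : j ∈ univ) => by
    rw [← Finset.sum_mul, hcol] : ∀ j ∈ univ, ∑ i, g i j * e j k = y j * e j k)]
  simp only [e, mul_ite, mul_one, mul_zero]
  rw [pre_eq, Finset.sum_ite, Finset.sum_const_zero, add_zero]
  congr 1
  ext j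
  simp [Nat.lt_succ_iff]

lemma lower_bound_k (g : Matrix (Fin m) (Fin m) ℝ) (x y : Fin m → ℝ)
    (hg : ∀ i j, 0 ≤ g i j) (hrow : ∀ i, ∑ j, g i j = x i)
    (hcol : ∀ j, ∑ i, g i j = y j) (k : Fin m) :
    |pre x ((k : ℕ) + 1) - pre y ((k : ℕ) + 1)| ≤ ∑ i, ∑ j, g i j * |e i k - e j k| := by
  have hd : pre x ((k : ℕ) + 1) - pre y ((k : ℕ) + 1)
      = ∑ i, ∑ j, g i j * (e i k - e j k) := by
    simp only [mul_sub, Finset.sum_sub_distrib]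
    rw [marginal_row g x hrow k, marginal_col g y hcol k]
  rw [hd]
  calc |∑ i, ∑ j, g i j * (e i k - e j k)|
      ≤ ∑ i, |∑ j, g i j * (e i k - e j k)| := Finset.abs_sum_le_sum_abs _ _
    _ ≤ ∑ i, ∑ j, |g i j * (e i k - e j k)| :=
        Finset.sum_le_sum fun i _ => Finset.abs_sum_le_sum_abs _ _
    _ = ∑ i, ∑ j, g i j * |e i k - e j k| := by
        refine Finset.sum_congr rfl fun i _ => Finset.sum_congr rfl fun j _ => ?_
        rw [abs_mul, abs_of_nonneg (hg i j)]




/-- the monotone coupling -/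
noncomputable def gam (x y : Fin m → ℝ) : Matrix (Fin m) (Fin m) ℝ :=
  fun i j => max 0 (min (pre x ((i : ℕ) + 1)) (pre y ((j : ℕ) + 1))
      - max (pre x (i : ℕ)) (pre y (j : ℕ)))

lemma gam_nonneg (x y : Fin m → ℝ) (i j : Fin m) : 0 ≤ gam x y i j := le_max_left _ _

lemma gam_pos {x y : Fin m → ℝ} {i j : Fin m} (h : 0 < gam x y i j) :
    pre x (i : ℕ) < pre y ((j : ℕ) + 1) ∧ pre y (j : ℕ) < pre x ((i : ℕ) + 1) := by
  unfold gam at h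
  have h' : max (pre x (i : ℕ)) (pre y (j : ℕ))
      < min (pre x ((i : ℕ) + 1)) (pre y ((j : ℕ) + 1)) := by
    by_contra hc
    push_neg at hc
    rw [max_eq_left (by linarith)] at h
    exact lt_irrefl _ h
  constructor
  · exact lt_of_le_of_lt (le_max_left _ _) (lt_of_lt_of_le h' (min_le_right _ _))
  · exact lt_of_le_of_lt (le_max_right _ _) (lt_of_lt_of_le h' (min_le_left _ _))

lemma gam_row (x y : Fin m → ℝ) (hx : ∀ i, 0 ≤ x i) (hy : ∀ i, 0 ≤ y i)
    (hsum : ∑ i, x i = ∑ i, y i) (i : Fin m) : ∑ j, gam x y i j = x i := by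
  have hXi : pre x (i : ℕ) ≤ pre x ((i : ℕ) + 1) := pre_mono x hx (Nat.le_succ _)
  set f : ℕ → ℝ := fun n => min (pre x ((i : ℕ) + 1)) (max (pre x (i : ℕ)) (pre y n)) with hf
  have key : ∀ j : Fin m, gam x y i j = f ((j : ℕ) + 1) - f (j : ℕ) := fun j =>
    clamp_diff hXi (pre_mono y hy (Nat.le_succ _))
  rw [Finset.sum_congr rfl fun j _ => key j]
  rw [Fin.sum_univ_eq_sum_range (fun n => f (n + 1) - f n) m]
  rw [Finset.sum_range_sub f m]
  have hym : pre x ((i : ℕ) + 1) ≤ pre y m := by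
    rw [pre_top, ← hsum, ← pre_top]
    exact pre_mono x hx i.isLt
  have h1 : f m = pre x ((i : ℕ) + 1) := by
    rw [hf]
    simp only
    rw [max_eq_right (le_trans hXi hym), min_eq_left hym]
  have h0 : f 0 = pre x (i : ℕ) := by
    rw [hf]
    simp only
    rw [pre_zero, max_eq_left (pre_nonneg x hx (i : ℕ)), min_eq_right hXi]
  rw [h1, h0, pre_succ]
  ring

lemma gam_col (x y : Fin m → ℝ) (hx : ∀ i, 0 ≤ x i) (hy : ∀ i, 0 ≤ y i)
    (hsum : ∑ i, x i = ∑ i, y i) (j : Fin m) : ∑ i, gam x y i j = y j := by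
  have hYj : pre y (j : ℕ) ≤ pre y ((j : ℕ) + 1) := pre_mono y hy (Nat.le_succ _)
  set f : ℕ → ℝ := fun n => min (pre y ((j : ℕ) + 1)) (max (pre y (j : ℕ)) (pre x n)) with hf
  have key : ∀ i : Fin m, gam x y i j = f ((i : ℕ) + 1) - f (i : ℕ) := by
    intro i
    unfold gam
    rw [min_comm (pre x ((i : ℕ) + 1)), max_comm (pre x (i : ℕ))]
    exact clamp_diff hYj (pre_mono x hx (Nat.le_succ _))
  rw [Finset.sum_congr rfl fun i _ => key i]
  rw [Fin.sum_univ_eq_sum_range (fun n => f (n + 1) - f n) m]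
  rw [Finset.sum_range_sub f m]
  have hxm : pre y ((j : ℕ) + 1) ≤ pre x m := by
    rw [pre_top, hsum, ← pre_top]
    exact pre_mono y hy j.isLt
  have h1 : f m = pre y ((j : ℕ) + 1) := by
    rw [hf]
    simp only
    rw [max_eq_right (le_trans hYj hxm), min_eq_left hxm]
  have h0 : f 0 = pre y (j : ℕ) := by
    rw [hf]
    simp only
    rw [pre_zero, max_eq_left (pre_nonneg y hy (j : ℕ)), min_eq_right hYj]
  rw [h1, h0, pre_succ]
  ring




lemma eq_k (x y : Fin m → ℝ) (hx : ∀ i, 0 ≤ x i) (hy : ∀ i, 0 ≤ y i)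
    (hsum : ∑ i, x i = ∑ i, y i) (k : Fin m) :
    ∑ i, ∑ j, gam x y i j * |e i k - e j k|
      = |pre x ((k : ℕ) + 1) - pre y ((k : ℕ) + 1)| := by
  classical
  set g := gam x y with hg
  set S1 : ℝ := ∑ i : Fin m, ∑ j : Fin m, (if (i : ℕ) ≤ (k : ℕ) ∧ ¬ (j : ℕ) ≤ (k : ℕ) then g i j else 0)
    with hS1
  set S2 : ℝ := ∑ i : Fin m, ∑ j : Fin m, (if ¬ (i : ℕ) ≤ (k : ℕ) ∧ (j : ℕ) ≤ (k : ℕ) then g i j else 0)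
    with hS2
  have hsplit : ∀ i j : Fin m, g i j * |e i k - e j k|
      = (if (i : ℕ) ≤ (k : ℕ) ∧ ¬ (j : ℕ) ≤ (k : ℕ) then g i j else 0)
        + (if ¬ (i : ℕ) ≤ (k : ℕ) ∧ (j : ℕ) ≤ (k : ℕ) then g i j else 0) := by
    intro i j
    unfold e
    by_cases hi : (i : ℕ) ≤ (k : ℕ) <;> by_cases hj : (j : ℕ) ≤ (k : ℕ) <;>
      simp [hi, hj] <;> norm_num
  have hLHS : ∑ i, ∑ j, g i j * |e i k - e j k| = S1 + S2 := by
    simp only [hsplit, Finset.sum_add_distrib, hS1, hS2]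
  have hS1n : 0 ≤ S1 := by
    refine Finset.sum_nonneg fun i _ => Finset.sum_nonneg fun j _ => ?_
    split
    · exact gam_nonneg x y i j
    · exact le_refl 0
  have hS2n : 0 ≤ S2 := by
    refine Finset.sum_nonneg fun i _ => Finset.sum_nonneg fun j _ => ?_
    split
    · exact gam_nonneg x y i j
    · exact le_refl 0
  have hdiff : pre x ((k : ℕ) + 1) - pre y ((k : ℕ) + 1) = S1 - S2 := by
    rw [← marginal_row g x (gam_row x y hx hy hsum) k,
      ← marginal_col g y (gam_col x y hx hy hsum) k]
    rw [hS1, hS2, ← Finset.sum_sub_distrib]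
    simp only [← Finset.sum_sub_distrib]
    refine Finset.sum_congr rfl fun i _ => Finset.sum_congr rfl fun j _ => ?_
    unfold e
    by_cases hi : (i : ℕ) ≤ (k : ℕ) <;> by_cases hj : (j : ℕ) ≤ (k : ℕ) <;>
      simp [hi, hj] <;> norm_num
  have hkey : S1 = 0 ∨ S2 = 0 := by
    by_contra hcon
    push_neg at hcon
    obtain ⟨h1, h2⟩ := hcon
    have ex1 : ∃ i j : Fin m,
        (if (i : ℕ) ≤ (k : ℕ) ∧ ¬ (j : ℕ) ≤ (k : ℕ) then g i j else 0) ≠ 0 := by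
      by_contra hc
      refine h1 (Finset.sum_eq_zero fun i _ => Finset.sum_eq_zero fun j _ => ?_)
      by_contra hne
      exact hc ⟨i, j, hne⟩
    have ex2 : ∃ i j : Fin m,
        (if ¬ (i : ℕ) ≤ (k : ℕ) ∧ (j : ℕ) ≤ (k : ℕ) then g i j else 0) ≠ 0 := by
      by_contra hc
      refine h2 (Finset.sum_eq_zero fun i _ => Finset.sum_eq_zero fun j _ => ?_)
      by_contra hne
      exact hc ⟨i, j, hne⟩
    obtain ⟨i, j, hij⟩ := ex1
    obtain ⟨i', j', hij'⟩ := ex2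
    by_cases hc1 : (i : ℕ) ≤ (k : ℕ) ∧ ¬ (j : ℕ) ≤ (k : ℕ)
    swap
    · rw [if_neg hc1] at hij; exact hij rfl
    by_cases hc2 : ¬ (i' : ℕ) ≤ (k : ℕ) ∧ (j' : ℕ) ≤ (k : ℕ)
    swap
    · rw [if_neg hc2] at hij'; exact hij' rfl
    rw [if_pos hc1] at hij
    rw [if_pos hc2] at hij'
    have hp1 := gam_pos (lt_of_le_of_ne (gam_nonneg x y i j) (Ne.symm hij))
    have hp2 := gam_pos (lt_of_le_of_ne (gam_nonneg x y i' j') (Ne.symm hij'))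
    -- from hp1 : Y (k+1) < X (k+1)
    have hA : pre y ((k : ℕ) + 1) < pre x ((k : ℕ) + 1) := by
      have hYk : pre y ((k : ℕ) + 1) ≤ pre y (j : ℕ) := pre_mono y hy (by omega)
      have hXk : pre x ((i : ℕ) + 1) ≤ pre x ((k : ℕ) + 1) := pre_mono x hx (by omega)
      linarith [hp1.2]
    have hB : pre x ((k : ℕ) + 1) < pre y ((k : ℕ) + 1) := by
      have hXk : pre x ((k : ℕ) + 1) ≤ pre x (i' : ℕ) := pre_mono x hx (by omega)
      have hYk : pre y ((j' : ℕ) + 1) ≤ pre y ((k : ℕ) + 1) := pre_mono y hy (by omega)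
      linarith [hp2.1]
    linarith
  rw [hLHS, hdiff]
  rcases hkey with h | h
  · rw [h, zero_add, zero_sub, abs_neg, abs_of_nonneg hS2n]
  · rw [h, add_zero, sub_zero, abs_of_nonneg hS1n]

end EmdAux

/-- Earth mover's distance between two vectors in ℝ^m: the ℓ1-distance
between their prefix-sum vectors. -/
noncomputable def emd {m : ℕ} (x y : Fin m → ℝ) : ℝ :=
  ∑ k : Fin m, |(∑ i ∈ Finset.Iic k, x i) - (∑ i ∈ Finset.Iic k, y i)|

theorem emd_eq_min_transport_cost {m : ℕ} (x y : Fin m → ℝ)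
    (hx : ∀ i, 0 ≤ x i) (hy : ∀ i, 0 ≤ y i)
    (hsum : ∑ i, x i = ∑ i, y i) :
    ∃ γ : Matrix (Fin m) (Fin m) ℝ,
      (∀ i j, 0 ≤ γ i j) ∧ (∀ i, ∑ j, γ i j = x i) ∧ (∀ j, ∑ i, γ i j = y j) ∧
      (∑ i, ∑ j, γ i j * |((i : ℕ) : ℝ) - ((j : ℕ) : ℝ)|) = emd x y ∧
      (∀ γ' : Matrix (Fin m) (Fin m) ℝ,
        (∀ i j, 0 ≤ γ' i j) → (∀ i, ∑ j, γ' i j = x i) → (∀ j, ∑ i, γ' i j = y j) →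
        (∑ i, ∑ j, γ i j * |((i : ℕ) : ℝ) - ((j : ℕ) : ℝ)|) ≤
          ∑ i, ∑ j, γ' i j * |((i : ℕ) : ℝ) - ((j : ℕ) : ℝ)|) := by
  classical
  have hemd : emd x y = ∑ k : Fin m, |EmdAux.pre x ((k : ℕ) + 1) - EmdAux.pre y ((k : ℕ) + 1)| := by
    unfold emd
    exact Finset.sum_congr rfl fun k _ => by rw [EmdAux.pre_fin x k, EmdAux.pre_fin y k]
  have hcostγ : (∑ i, ∑ j, EmdAux.gam x y i j * |((i : ℕ) : ℝ) - ((j : ℕ) : ℝ)|) = emd x y := by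
    rw [EmdAux.cost_eq, hemd]
    exact Finset.sum_congr rfl fun k _ => EmdAux.eq_k x y hx hy hsum k
  refine ⟨EmdAux.gam x y, EmdAux.gam_nonneg x y, EmdAux.gam_row x y hx hy hsum,
    EmdAux.gam_col x y hx hy hsum, hcostγ, ?_⟩
  intro γ' hγ' hrow' hcol'
  rw [hcostγ, hemd, EmdAux.cost_eq γ']
  exact Finset.sum_le_sum fun k _ => EmdAux.lower_bound_k γ' x y hγ' hrow' hcol' k
end

section
/- Let C be a finite set of m ≥ 1 candidates and let ◁ be a fixed linear order on C. Then the number of linear orders on C that are single-peaked with respect to ◁ is exactly 2^{m−1}. -/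
/-!
The bottom-ranked candidate of a single-peaked ranking is an endpoint of the axis, since otherwise
the other candidates, which are the top `m - 1`, would not form an interval. Deleting it leaves a
single-peaked ranking of the remaining candidates, and conversely appending either endpoint at
the bottom of a single-peaked ranking of the others yields a single-peaked ranking. For `m ≥ 2`
the two endpoints differ, so the count doubles at each step from the unique ranking for `m = 1`.
-/

open Finset

/-- A vote, given as a ranking `v : C ≃ Fin m` (with `v c` the 0-indexed
position of candidate `c`, position 0 being the top), is single-peaked with
respect to the societal axis (the linear order on `C`) if for each ℓ the set
of the ℓ top-ranked candidates is an interval of the axis. -/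
def SinglePeaked {C : Type*} [LinearOrder C] {m : ℕ} (v : C ≃ Fin m) : Prop :=
  ∀ ℓ : ℕ, ({c : C | (v c : ℕ) < ℓ} : Set C).OrdConnected

open Set

theorem Set.OrdConnected.image_orderEmbedding {α β : Type*} [Preorder α] [Preorder β]
    {e : α ↪o β} {s : Set α} (hs : s.OrdConnected) (he : (range e).OrdConnected) :
    (e '' s).OrdConnected := by
  refine ⟨?_⟩
  rintro _ ⟨x, hx, rfl⟩ _ ⟨y, hy, rfl⟩
  rw [← e.image_Icc he]
  exact image_mono (hs.out hx hy)

theorem Equiv.optionCongr_removeNone {α β : Type*} {σ : Option α ≃ Option β}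
    (h : σ none = none) : σ.removeNone.optionCongr = σ := by
  ext1 (_ | x)
  · simp [h]
  · obtain ⟨y, hy⟩ := Option.ne_none_iff_exists'.1 <|
      σ.injective.ne (Option.some_ne_none x) |>.trans_eq h
    simp [Equiv.removeNone_some σ ⟨y, hy⟩]

namespace SinglePeaked

variable {C D : Type*} [LinearOrder C] [LinearOrder D] {m : ℕ}

theorem of_subsingleton [Subsingleton C] (v : C ≃ Fin m) : SinglePeaked v :=
  fun _ => ⟨fun x hx _ _ z _ => Subsingleton.elim x z ▸ hx⟩

theorem orderIso_trans {v : C ≃ Fin m} (hv : SinglePeaked v) (e : D ≃o C) :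
    SinglePeaked (e.toEquiv.trans v) :=
  fun ℓ => (hv ℓ).preimage_mono e.monotone

theorem orderIso_trans_iff (e : D ≃o C) (v : C ≃ Fin m) :
    SinglePeaked (e.toEquiv.trans v) ↔ SinglePeaked v :=
  ⟨fun h => by simpa [← Equiv.trans_assoc] using h.orderIso_trans e.symm,
    fun h => h.orderIso_trans e⟩

end SinglePeaked

theorem card_singlePeaked_congr {C D : Type*} [LinearOrder C] [LinearOrder D] {m : ℕ}
    (e : D ≃o C) :
    Nat.card {v : C ≃ Fin m // SinglePeaked v} = Nat.card {v : D ≃ Fin m // SinglePeaked v} :=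
  Nat.card_congr <| (e.toEquiv.symm.equivCongr (.refl _)).subtypeEquiv fun v =>
    (SinglePeaked.orderIso_trans_iff e v).symm

theorem card_singlePeaked_of_subsingleton {C : Type*} [LinearOrder C] [Subsingleton C] {m : ℕ} :
    Nat.card {v : C ≃ Fin m // SinglePeaked v} = Nat.card (C ≃ Fin m) :=
  Nat.card_congr (Equiv.subtypeUnivEquiv SinglePeaked.of_subsingleton)

namespace Fin

variable {n : ℕ}

def rankLast (i : Fin (n + 1)) (w : Fin n ≃ Fin n) : Fin (n + 1) ≃ Fin (n + 1) :=
  (finSuccEquiv' i).trans (w.optionCongr.trans finSuccEquivLast.symm)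

@[simp]
theorem rankLast_apply_self (i : Fin (n + 1)) (w : Fin n ≃ Fin n) : rankLast i w i = last n := by
  simp [rankLast]

@[simp]
theorem rankLast_apply_succAbove (i : Fin (n + 1)) (w : Fin n ≃ Fin n) (c : Fin n) :
    rankLast i w (i.succAbove c) = (w c).castSucc := by
  simp [rankLast]

theorem rankLast_symm_last (i : Fin (n + 1)) (w : Fin n ≃ Fin n) :
    (rankLast i w).symm (last n) = i := by
  simp [Equiv.symm_apply_eq]

theorem rankLast_inj {i i' : Fin (n + 1)} {w w' : Fin n ≃ Fin n} :
    rankLast i w = rankLast i' w' ↔ i = i' ∧ w = w' := by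
  refine ⟨fun h => ?_, fun ⟨hi, hw⟩ => hi ▸ hw ▸ rfl⟩
  obtain rfl : i = i' := by rw [← rankLast_symm_last i w, h, rankLast_symm_last]
  refine ⟨rfl, Equiv.ext fun c => castSucc_injective n ?_⟩
  simpa using congr($h (i.succAbove c))

theorem exists_rankLast (v : Fin (n + 1) ≃ Fin (n + 1)) :
    ∃ w, rankLast (v.symm (last n)) w = v := by
  set σ := (finSuccEquiv' (v.symm (last n))).symm.trans (v.trans finSuccEquivLast)
  refine ⟨σ.removeNone, ?_⟩
  rw [rankLast, Equiv.optionCongr_removeNone (by simp [σ])]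
  ext c
  simp [σ]

end Fin

open Fin

namespace SinglePeaked

variable {n : ℕ} {i : Fin (n + 1)} {w : Fin n ≃ Fin n}

theorem of_rankLast (h : SinglePeaked (rankLast i w)) : SinglePeaked w := fun ℓ => by
  simpa [Set.preimage] using (h ℓ).preimage_mono (strictMono_succAbove i).monotone

theorem rankLast (hi : i = 0 ∨ i = last n) (hw : SinglePeaked w) :
    SinglePeaked (Fin.rankLast i w) := by
  intro ℓ
  rcases le_or_gt ℓ n with hℓ | hℓ
  · have hrange : (range (succAboveOrderEmb i)).OrdConnected := by
      rw [range_succAboveOrderEmb]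
      rcases hi with rfl | rfl
      · rw [← bot_eq_zero, ← Set.Ioi_bot]
        exact ordConnected_Ioi
      · rw [← top_eq_last, ← Set.Iio_top]
        exact ordConnected_Iio
    convert (hw ℓ).image_orderEmbedding hrange
    ext c
    induction c using i.succAboveCases <;> simp [hℓ]
  · have hall : {c | (Fin.rankLast i w c : ℕ) < ℓ} = Set.univ :=
      eq_univ_of_forall fun c => (Fin.rankLast i w c).is_lt.trans_le hℓ
    exact hall ▸ ordConnected_univ

theorem symm_last_eq_zero_or_last {v : Fin (n + 1) ≃ Fin (n + 1)} (hv : SinglePeaked v) :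
    v.symm (last n) = 0 ∨ v.symm (last n) = last n := by
  by_contra! h
  have hbelow : ∀ c ≠ v.symm (last n), (v c : ℕ) < n := fun c hc =>
    val_lt_last fun h' => hc (v.eq_symm_apply.2 h')
  have hpeak : v.symm (last n) ∈ Set.Icc 0 (last n) := ⟨zero_le _, le_last _⟩
  simpa using (hv n).out (hbelow 0 h.1.symm) (hbelow _ h.2.symm) hpeak

end SinglePeaked

theorem card_singlePeaked_fin_succ {n : ℕ} (hn : n ≠ 0) :
    Nat.card {v : Fin (n + 1) ≃ Fin (n + 1) // SinglePeaked v} =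
      2 * Nat.card {w : Fin n ≃ Fin n // SinglePeaked w} := by
  let F : ({0, last n} : Set (Fin (n + 1))) × {w : Fin n ≃ Fin n // SinglePeaked w} →
      {v : Fin (n + 1) ≃ Fin (n + 1) // SinglePeaked v} :=
    fun p => ⟨rankLast p.1 p.2, p.2.2.rankLast p.1.2⟩
  have hF : F.Bijective := by
    refine ⟨fun p q h => ?_, fun v => ?_⟩
    · obtain ⟨hi, hw⟩ := rankLast_inj.1 (congr_arg Subtype.val h)
      exact Prod.ext (Subtype.ext hi) (Subtype.ext hw)
    · obtain ⟨w, hw⟩ := exists_rankLast v.1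
      exact ⟨(⟨_, v.2.symm_last_eq_zero_or_last⟩, ⟨w, (hw ▸ v.2).of_rankLast⟩),
        Subtype.ext hw⟩
  rw [← Nat.card_eq_of_bijective F hF, Nat.card_prod, Nat.card_coe_set_eq,
    Set.ncard_pair (by simpa [Fin.ext_iff] using hn.symm)]

theorem card_singlePeaked_fin : ∀ m : ℕ,
    Nat.card {v : Fin m ≃ Fin m // SinglePeaked v} = 2 ^ (m - 1)
  | 0 | 1 => by simp [card_singlePeaked_of_subsingleton]
  | n + 2 => by
    rw [card_singlePeaked_fin_succ n.succ_ne_zero, card_singlePeaked_fin (n + 1)]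
    simp [pow_succ']

theorem singlePeaked_count_general {C : Type*} [Fintype C] [LinearOrder C] :
    Nat.card {v : C ≃ Fin (Fintype.card C) // SinglePeaked v} =
      2 ^ (Fintype.card C - 1) := by
  rw [card_singlePeaked_congr (Fintype.orderIsoFinOfCardEq C rfl), card_singlePeaked_fin]

theorem singlePeaked_count {C : Type*} [Fintype C] [LinearOrder C]
    (hm : 1 ≤ Fintype.card C) :
    Nat.card {v : C ≃ Fin (Fintype.card C) // SinglePeaked v} =
      2 ^ (Fintype.card C - 1) :=
  singlePeaked_count_general
end

section
/- Let a < b be real numbers (ideal points of two candidates) and let t_1 ≤ t_2 ≤ ⋯ ≤ t_n be real numbers (ideal points of n voters). Then the set of indices j ∈ {1,…,n} with |t_j − a| < |t_j − b| is downward closed (a prefix of the ordered voter sequence), and the set of indices j with |t_j − b| < |t_j − a| is upward closed (a suffix). In particular, ordering the voters of a 1-Euclidean election by their ideal points, for each pair of candidates the set of voters preferring one candidate to the other forms a prefix or a suffix, so the election is single-crossing. -/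
open Finset

lemma abs_lt_iff_mid (a b x : ℝ) (hab : a < b) :
    |x - a| < |x - b| ↔ 2 * x < a + b := by
  constructor
  · intro h
    rcases abs_cases (x - a) with ⟨e1, _⟩ | ⟨e1, _⟩ <;>
    rcases abs_cases (x - b) with ⟨e2, _⟩ | ⟨e2, _⟩ <;> linarith
  · intro h
    rcases abs_cases (x - a) with ⟨e1, h1⟩ | ⟨e1, h1⟩ <;>
    rcases abs_cases (x - b) with ⟨e2, h2⟩ | ⟨e2, h2⟩ <;> linarith

lemma abs_lt_iff_mid' (a b x : ℝ) (hab : a < b) :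
    |x - b| < |x - a| ↔ a + b < 2 * x := by
  constructor
  · intro h
    rcases abs_cases (x - a) with ⟨e1, h1⟩ | ⟨e1, h1⟩ <;>
    rcases abs_cases (x - b) with ⟨e2, h2⟩ | ⟨e2, h2⟩ <;> linarith
  · intro h
    rcases abs_cases (x - a) with ⟨e1, h1⟩ | ⟨e1, h1⟩ <;>
    rcases abs_cases (x - b) with ⟨e2, h2⟩ | ⟨e2, h2⟩ <;> linarith

theorem euclidean_singleCrossing {n : ℕ} (a b : ℝ) (hab : a < b)
    (t : Fin n → ℝ) (ht : Monotone t) :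
    IsLowerSet {j : Fin n | |t j - a| < |t j - b|} ∧
    IsUpperSet {j : Fin n | |t j - b| < |t j - a|} := by
  constructor
  · intro i j hji hi
    simp only [Set.mem_setOf_eq, abs_lt_iff_mid _ _ _ hab] at *
    have := ht hji; linarith
  · intro i j hij hi
    simp only [Set.mem_setOf_eq, abs_lt_iff_mid' _ _ _ hab] at *
    have := ht hij; linarith
end
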